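/- For t > 0, define g_c(t,y) = −J_0(√(t²−y²))/2 + ((t+y)/(2√(t²−y²))) I_1(√(t²−y²)) − (y²/(2 (t²−y²)^{3/2})) (I_1 + J_1)(√(t²−y²)) + (t²/(4(t²−y²))) (I_0 + I_2 + J_0 − J_2)(√(t²−y²)) on |y| < t. Then lim_{y↑t} g_c(t,y) = t/2 and lim_{y↓−t} g_c(t,y) = 0. -/

import Mathlib

open Real Filter


/-- Modified Bessel function of the first kind, order 0. -/
noncomputable def besselI0 (r : ℝ) : ℝ :=
  ∑' k : ℕ, (r / 2) ^ (2 * k) / ((Nat.factorial k : ℝ)) ^ 2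

/-- Bessel function of the first kind, order 0. -/
noncomputable def besselJ0 (r : ℝ) : ℝ :=
  ∑' k : ℕ, (-1 : ℝ) ^ k * (r / 2) ^ (2 * k) / ((Nat.factorial k : ℝ)) ^ 2

/-- Modified Bessel function of the first kind, order 1. -/
noncomputable def besselI1 (r : ℝ) : ℝ :=
  ∑' k : ℕ, (r / 2) ^ (2 * k + 1) / ((Nat.factorial k : ℝ) * (Nat.factorial (k + 1)))

/-- Bessel function of the first kind, order 1. -/
noncomputable def besselJ1 (r : ℝ) : ℝ :=
  ∑' k : ℕ, (-1 : ℝ) ^ k * (r / 2) ^ (2 * k + 1) / ((Nat.factorial k : ℝ) * (Nat.factorial (k + 1)))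

/-- Modified Bessel function of the first kind, order 2. -/
noncomputable def besselI2 (r : ℝ) : ℝ :=
  ∑' k : ℕ, (r / 2) ^ (2 * k + 2) / ((Nat.factorial k : ℝ) * (Nat.factorial (k + 2)))

/-- Bessel function of the first kind, order 2. -/
noncomputable def besselJ2 (r : ℝ) : ℝ :=
  ∑' k : ℕ, (-1 : ℝ) ^ k * (r / 2) ^ (2 * k + 2) / ((Nat.factorial k : ℝ) * (Nat.factorial (k + 2)))

/-!
With `u = t ^ 2 - y ^ 2` and `r = √u`, each of `I_n r`, `J_n r` is `(r / 2) ^ n` times an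
entire power series in `u` with coefficients `(±1) ^ k / (4 ^ k k! (k + n)!)`. Writing a series
as its value at `u = 0` plus `u` times its slope, the `1 / u` terms of `g_c` contribute
`(2 t ^ 2 - 2 y ^ 2) / (4 u) = 1/2`, and everything else is continuous down to `u = 0`.
The `I`- and `J`-series have equal constant and opposite linear coefficients, so the slope
terms cancel in the limit, leaving `g_c → -1/2 + (t + y₀) / 4 + 1/2 = (t + y₀) / 4`
as `y → y₀ = ±t`.
-/

open Set
open scoped Nat Topology

section FactorialBoundedSeries

variable {a : ℕ → ℝ} {C : ℝ}

theorem summable_mul_pow_of_abs_le_div_factorial (h : ∀ k, |a k| ≤ C / k !) (u : ℝ) :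
    Summable (fun k => a k * u ^ k) := by
  refine Summable.of_norm_bounded ((Real.summable_pow_div_factorial |u|).mul_left C) fun k => ?_
  calc ‖a k * u ^ k‖ = |a k| * |u| ^ k := by
        rw [norm_mul, norm_pow, Real.norm_eq_abs, Real.norm_eq_abs]
    _ ≤ C / k ! * |u| ^ k := by gcongr; exact h k
    _ = C * (|u| ^ k / k !) := by ring

theorem abs_succ_le_div_factorial (h : ∀ k, |a k| ≤ C / k !) (k : ℕ) :
    |a (k + 1)| ≤ C / k ! := by
  have hC : 0 ≤ C := by simpa using (abs_nonneg _).trans (h 0)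
  exact (h (k + 1)).trans <| div_le_div_of_nonneg_left hC (by positivity)
    (by exact_mod_cast Nat.factorial_le k.le_succ)

theorem tsum_mul_pow_eq_add_mul_tsum_succ (h : ∀ k, |a k| ≤ C / k !) (u : ℝ) :
    ∑' k, a k * u ^ k = a 0 + u * ∑' k, a (k + 1) * u ^ k := by
  rw [(summable_mul_pow_of_abs_le_div_factorial h u).tsum_eq_zero_add, ← tsum_mul_left]
  simp only [pow_zero, mul_one, pow_succ]
  congr 1
  exact tsum_congr fun k => by ring

theorem tendsto_tsum_mul_pow_nhds_zero (h : ∀ k, |a k| ≤ C / k !) :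
    Tendsto (fun u => ∑' k, a k * u ^ k) (𝓝 0) (𝓝 (a 0)) := by
  have hcont : ContinuousOn (fun u : ℝ => ∑' k, a k * u ^ k) (Icc (-1) 1) := by
    refine continuousOn_tsum (fun k => (continuous_const.mul (continuous_pow k)).continuousOn)
      ((Real.summable_pow_div_factorial 1).mul_left C) fun k u hu => ?_
    have hu1 : |u| ≤ 1 := abs_le.2 hu
    calc ‖a k * u ^ k‖ = |a k| * |u| ^ k := by
          rw [norm_mul, norm_pow, Real.norm_eq_abs, Real.norm_eq_abs]
      _ ≤ C / k ! * 1 ^ k :=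
          mul_le_mul (h k) (by gcongr) (by positivity) ((abs_nonneg _).trans (h k))
      _ = C * (1 ^ k / k !) := by ring
  have hzero : ∑' k, a k * (0 : ℝ) ^ k = a 0 := by
    rw [tsum_eq_single 0 fun k hk => by simp [hk]]
    simp
  simpa [hzero] using
    (hcont.continuousAt (Icc_mem_nhds (show (-1 : ℝ) < 0 by norm_num) one_pos)).tendsto

theorem tendsto_slope_tsum_mul_pow (h : ∀ k, |a k| ≤ C / k !) :
    Tendsto (fun u => (∑' k, a k * u ^ k - a 0) / u) (𝓝[≠] 0) (𝓝 (a 1)) := by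
  refine ((tendsto_tsum_mul_pow_nhds_zero (abs_succ_le_div_factorial h)).mono_left
    nhdsWithin_le_nhds).congr' ?_
  filter_upwards [self_mem_nhdsWithin] with u (hu : u ≠ 0)
  rw [tsum_mul_pow_eq_add_mul_tsum_succ h u, add_sub_cancel_left, mul_div_cancel_left₀ _ hu]

end FactorialBoundedSeries

section BesselSeries

noncomputable def besselCoeff (s : ℝ) (n k : ℕ) : ℝ := s ^ k / (4 ^ k * (k ! * (k + n)!))

noncomputable def besselSeries (s : ℝ) (n : ℕ) (u : ℝ) : ℝ :=
  ∑' k, besselCoeff s n k * u ^ k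

variable {s : ℝ}

theorem abs_besselCoeff_le (hs : |s| ≤ 1) (n k : ℕ) : |besselCoeff s n k| ≤ 1 / k ! := by
  have hden : (k ! : ℝ) ≤ 4 ^ k * (k ! * (k + n)!) := by
    have h4 : (1 : ℝ) ≤ 4 ^ k := one_le_pow₀ (by norm_num)
    have hf : (1 : ℝ) ≤ (k + n)! := by exact_mod_cast (k + n).factorial_pos
    simpa using
      mul_le_mul h4 (le_mul_of_one_le_right (by positivity) hf) (by positivity) (by positivity)
  rw [besselCoeff, abs_div, abs_pow,
    abs_of_pos (by positivity : (0 : ℝ) < 4 ^ k * (k ! * (k + n)!))]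
  exact div_le_div₀ zero_le_one (pow_le_one₀ (abs_nonneg s) hs) (by positivity) hden

theorem besselCoeff_zero (s : ℝ) (n : ℕ) : besselCoeff s n 0 = 1 / n ! := by
  simp [besselCoeff]

theorem besselCoeff_one (s : ℝ) (n : ℕ) : besselCoeff s n 1 = s / (4 * (n + 1)!) := by
  simp [besselCoeff, add_comm]

theorem tendsto_besselSeries (hs : |s| ≤ 1) (n : ℕ) :
    Tendsto (besselSeries s n) (𝓝 0) (𝓝 (1 / n !)) := by
  have h := tendsto_tsum_mul_pow_nhds_zero (abs_besselCoeff_le hs n)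
  rwa [besselCoeff_zero] at h

noncomputable def besselSlope (s : ℝ) (n : ℕ) (u : ℝ) : ℝ :=
  (besselSeries s n u - 1 / n !) / u

theorem tendsto_besselSlope (hs : |s| ≤ 1) (n : ℕ) :
    Tendsto (besselSlope s n) (𝓝[≠] 0) (𝓝 (s / (4 * (n + 1)!))) := by
  have h := tendsto_slope_tsum_mul_pow (abs_besselCoeff_le hs n)
  rwa [besselCoeff_zero, besselCoeff_one] at h

theorem div_two_pow_two_mul (r : ℝ) (k : ℕ) : (r / 2) ^ (2 * k) = (r ^ 2) ^ k / 4 ^ k := by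
  rw [pow_mul, div_pow, div_pow]
  norm_num

theorem besselI0_eq_besselSeries (r : ℝ) : besselI0 r = besselSeries 1 0 (r ^ 2) := by
  refine tsum_congr fun k => ?_
  rw [besselCoeff, Nat.add_zero, div_two_pow_two_mul]
  ring

theorem besselJ0_eq_besselSeries (r : ℝ) : besselJ0 r = besselSeries (-1) 0 (r ^ 2) := by
  refine tsum_congr fun k => ?_
  rw [besselCoeff, Nat.add_zero, div_two_pow_two_mul]
  ring

theorem besselI1_eq_besselSeries (r : ℝ) : besselI1 r = r / 2 * besselSeries 1 1 (r ^ 2) := by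
  rw [besselSeries, ← tsum_mul_left]
  refine tsum_congr fun k => ?_
  rw [besselCoeff, pow_add, div_two_pow_two_mul]
  ring

theorem besselJ1_eq_besselSeries (r : ℝ) : besselJ1 r = r / 2 * besselSeries (-1) 1 (r ^ 2) := by
  rw [besselSeries, ← tsum_mul_left]
  refine tsum_congr fun k => ?_
  rw [besselCoeff, pow_add, div_two_pow_two_mul]
  ring

theorem besselI2_eq_besselSeries (r : ℝ) : besselI2 r = r ^ 2 / 4 * besselSeries 1 2 (r ^ 2) := by
  rw [besselSeries, ← tsum_mul_left]
  refine tsum_congr fun k => ?_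
  rw [besselCoeff, pow_add, div_two_pow_two_mul]
  ring

theorem besselJ2_eq_besselSeries (r : ℝ) :
    besselJ2 r = r ^ 2 / 4 * besselSeries (-1) 2 (r ^ 2) := by
  rw [besselSeries, ← tsum_mul_left]
  refine tsum_congr fun k => ?_
  rw [besselCoeff, pow_add, div_two_pow_two_mul]
  ring

end BesselSeries

noncomputable def erlang2Gc (t y : ℝ) : ℝ :=
  -besselJ0 (Real.sqrt (t ^ 2 - y ^ 2)) / 2 +
    (t + y) / (2 * Real.sqrt (t ^ 2 - y ^ 2)) * besselI1 (Real.sqrt (t ^ 2 - y ^ 2)) -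
    y ^ 2 / (2 * (t ^ 2 - y ^ 2) ^ ((3 : ℝ) / 2)) *
      (besselI1 (Real.sqrt (t ^ 2 - y ^ 2)) + besselJ1 (Real.sqrt (t ^ 2 - y ^ 2))) +
    t ^ 2 / (4 * (t ^ 2 - y ^ 2)) *
      (besselI0 (Real.sqrt (t ^ 2 - y ^ 2)) + besselI2 (Real.sqrt (t ^ 2 - y ^ 2)) +
        besselJ0 (Real.sqrt (t ^ 2 - y ^ 2)) - besselJ2 (Real.sqrt (t ^ 2 - y ^ 2)))

noncomputable def erlang2GcRegular (t y u : ℝ) : ℝ :=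
  -besselSeries (-1) 0 u / 2 + (t + y) / 4 * besselSeries 1 1 u + 1 / 2 +
    t ^ 2 / 4 * (besselSlope 1 0 u + besselSlope (-1) 0 u +
      (besselSeries 1 2 u - besselSeries (-1) 2 u) / 4) -
    y ^ 2 / 4 * (besselSlope 1 1 u + besselSlope (-1) 1 u)

theorem erlang2Gc_eq_regular {t y : ℝ} (hy : y ∈ Ioo (-t) t) :
    erlang2Gc t y = erlang2GcRegular t y (t ^ 2 - y ^ 2) := by
  have hu : 0 < t ^ 2 - y ^ 2 := by nlinarith [hy.1, hy.2]
  have hr : Real.sqrt (t ^ 2 - y ^ 2) ^ 2 = t ^ 2 - y ^ 2 := Real.sq_sqrt hu.le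
  have hr0 : 0 < Real.sqrt (t ^ 2 - y ^ 2) := Real.sqrt_pos.2 hu
  have h32 : (t ^ 2 - y ^ 2) ^ ((3 : ℝ) / 2) = (t ^ 2 - y ^ 2) * Real.sqrt (t ^ 2 - y ^ 2) := by
    rw [show (3 : ℝ) / 2 = 1 + 1 / 2 by norm_num, Real.rpow_add hu, Real.rpow_one,
      Real.sqrt_eq_rpow]
  rw [erlang2Gc, erlang2GcRegular, besselI0_eq_besselSeries, besselJ0_eq_besselSeries,
    besselI1_eq_besselSeries, besselJ1_eq_besselSeries, besselI2_eq_besselSeries,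
    besselJ2_eq_besselSeries, hr, h32]
  generalize Real.sqrt (t ^ 2 - y ^ 2) = r at hr0
  generalize hu_def : t ^ 2 - y ^ 2 = u at hu
  rw [show t ^ 2 = u + y ^ 2 by linarith]
  simp only [besselSlope, Nat.factorial, Nat.cast_one]
  field_simp
  ring

theorem tendsto_erlang2Gc {t y₀ : ℝ} (hy₀ : y₀ ^ 2 = t ^ 2) :
    Tendsto (erlang2Gc t) (𝓝[Ioo (-t) t] y₀) (𝓝 ((t + y₀) / 4)) := by
  have hu : Tendsto (fun y => t ^ 2 - y ^ 2) (𝓝[Ioo (-t) t] y₀) (𝓝[≠] 0) := by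
    refine tendsto_nhdsWithin_iff.2 ⟨?_, ?_⟩
    · exact ((by fun_prop : Continuous fun y : ℝ => t ^ 2 - y ^ 2).tendsto' y₀ 0
        (by rw [hy₀, sub_self])).mono_left nhdsWithin_le_nhds
    · filter_upwards [self_mem_nhdsWithin] with y hy
      exact (show (0 : ℝ) < t ^ 2 - y ^ 2 by nlinarith [hy.1, hy.2]).ne'
  have hS {s : ℝ} (hs : |s| ≤ 1) (n : ℕ) : Tendsto (fun y => besselSeries s n (t ^ 2 - y ^ 2))
      (𝓝[Ioo (-t) t] y₀) (𝓝 (1 / n !)) :=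
    (tendsto_besselSeries hs n).comp (hu.mono_right nhdsWithin_le_nhds)
  have hD {s : ℝ} (hs : |s| ≤ 1) (n : ℕ) : Tendsto (fun y => besselSlope s n (t ^ 2 - y ^ 2))
      (𝓝[Ioo (-t) t] y₀) (𝓝 (s / (4 * (n + 1)!))) :=
    (tendsto_besselSlope hs n).comp hu
  have hy : Tendsto (fun y => y) (𝓝[Ioo (-t) t] y₀) (𝓝 y₀) := nhdsWithin_le_nhds
  have hI : |(1 : ℝ)| ≤ 1 := abs_one.le
  have hJ : |(-1 : ℝ)| ≤ 1 := by norm_num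
  have hreg : Tendsto (fun y => erlang2GcRegular t y (t ^ 2 - y ^ 2)) (𝓝[Ioo (-t) t] y₀)
      (𝓝 ((t + y₀) / 4)) := by
    convert (((((hS hJ 0).neg.div_const 2).add
      (((tendsto_const_nhds (x := t)).add hy).div_const 4 |>.mul (hS hI 1))).add
      (tendsto_const_nhds (x := (1 : ℝ) / 2))).add
      ((tendsto_const_nhds (x := t ^ 2 / 4)).mul (((hD hI 0).add (hD hJ 0)).add
        (((hS hI 2).sub (hS hJ 2)).div_const 4)))).sub
      (((hy.pow 2).div_const 4).mul ((hD hI 1).add (hD hJ 1))) using 2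
    · rfl
    · norm_num [Nat.factorial]
  refine hreg.congr' ?_
  filter_upwards [self_mem_nhdsWithin] with y hy using (erlang2Gc_eq_regular hy).symm

/-- Boundary limits of the continuous part of the 2-Erlang telegraph density:
`lim_{y↑t} g_c(t,y) = t/2` and `lim_{y↓−t} g_c(t,y) = 0`. -/
theorem erlang2_gc_boundary (t : ℝ) (ht : 0 < t) :
    Filter.Tendsto (fun y : ℝ =>
      -besselJ0 (Real.sqrt (t ^ 2 - y ^ 2)) / 2 +
        (t + y) / (2 * Real.sqrt (t ^ 2 - y ^ 2)) * besselI1 (Real.sqrt (t ^ 2 - y ^ 2)) -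
        y ^ 2 / (2 * (t ^ 2 - y ^ 2) ^ ((3 : ℝ) / 2)) *
          (besselI1 (Real.sqrt (t ^ 2 - y ^ 2)) + besselJ1 (Real.sqrt (t ^ 2 - y ^ 2))) +
        t ^ 2 / (4 * (t ^ 2 - y ^ 2)) *
          (besselI0 (Real.sqrt (t ^ 2 - y ^ 2)) + besselI2 (Real.sqrt (t ^ 2 - y ^ 2)) +
            besselJ0 (Real.sqrt (t ^ 2 - y ^ 2)) - besselJ2 (Real.sqrt (t ^ 2 - y ^ 2))))
      (nhdsWithin t (Set.Iio t)) (nhds (t / 2)) ∧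
    Filter.Tendsto (fun y : ℝ =>
      -besselJ0 (Real.sqrt (t ^ 2 - y ^ 2)) / 2 +
        (t + y) / (2 * Real.sqrt (t ^ 2 - y ^ 2)) * besselI1 (Real.sqrt (t ^ 2 - y ^ 2)) -
        y ^ 2 / (2 * (t ^ 2 - y ^ 2) ^ ((3 : ℝ) / 2)) *
          (besselI1 (Real.sqrt (t ^ 2 - y ^ 2)) + besselJ1 (Real.sqrt (t ^ 2 - y ^ 2))) +
        t ^ 2 / (4 * (t ^ 2 - y ^ 2)) *
          (besselI0 (Real.sqrt (t ^ 2 - y ^ 2)) + besselI2 (Real.sqrt (t ^ 2 - y ^ 2)) +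
            besselJ0 (Real.sqrt (t ^ 2 - y ^ 2)) - besselJ2 (Real.sqrt (t ^ 2 - y ^ 2))))
      (nhdsWithin (-t) (Set.Ioi (-t))) (nhds 0) := by
  have hlt : -t < t := by linarith
  have hright : Tendsto (erlang2Gc t) (𝓝[Ioo (-t) t] t) (𝓝 ((t + t) / 4)) :=
    tendsto_erlang2Gc rfl
  have hleft : Tendsto (erlang2Gc t) (𝓝[Ioo (-t) t] (-t)) (𝓝 ((t + -t) / 4)) :=
    tendsto_erlang2Gc (neg_sq t)
  rw [nhdsWithin_Ioo_eq_nhdsLT hlt, show (t + t) / 4 = t / 2 by ring] at hright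
  rw [nhdsWithin_Ioo_eq_nhdsGT hlt, add_neg_cancel, zero_div] at hleft
  exact ⟨hright, hleft⟩
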